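/- arXiv:0804.3074 — 5 statements merged into one kernel-verified Lean document; each statement's English description precedes it below -/
import Mathlib

section
/- For integers 0 ≤ k ≤ n, the (q,t)-binomial coefficient satisfies the Pascal-type relation: [n choose k]_{q,t} = [n-1 choose k-1]_{q,t^q} + t^{q^k-1} · (k!_{q,t^q} / k!_{q,t}) · [n-1 choose k]_{q,t^q}. -/
noncomputable section

/-- The (q,t)-factorial `k!_{q,t} = ∏_{i=0}^{k-1} (1 - t^{q^k - q^i})`, as a function of
`t` in the field of rational functions `ℚ(t)`. -/
def qtfact (q k : ℕ) (t : RatFunc ℚ) : RatFunc ℚ :=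
  ∏ i ∈ Finset.range k, (1 - t ^ (q ^ k - q ^ i))

/-- The (q,t)-binomial coefficient `[n choose k]_{q,t} = n!_{q,t}/(k!_{q,t} · (n-k)!_{q,t^{q^k}})`,
with the convention that it vanishes outside the range `0 ≤ k ≤ n`. -/
def qtbinom (q n : ℕ) (k : ℤ) (t : RatFunc ℚ) : RatFunc ℚ :=
  if 0 ≤ k ∧ k ≤ (n : ℤ) then
    qtfact q n t / (qtfact q k.toNat t * qtfact q (n - k.toNat) (t ^ q ^ k.toNat))
  else 0

/-!
Peeling off the `i = 0` factor gives `m!_{q,t} = (1 - t^{q^m - 1}) · (m-1)!_{q,t^q}`. Applying this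
to `n!_{q,t}`, `k!_{q,t}` and `(n-k)!_{q,t^{q^k}}` writes both terms of the right-hand side over the
common denominator `k!_{q,t} · (n-k)!_{q,t^{q^k}}`, and the numerators add up because
`1 - t^{a+b} = (1 - t^a) + t^a (1 - t^b)` with `a = q^k - 1`, `b = q^n - q^k`.
All factorials involved are nonzero as soon as `t` is not a root of unity.
-/

lemma RatFunc.not_isOfFinOrder_X {K : Type*} [Field K] :
    ¬ IsOfFinOrder (RatFunc.X : RatFunc K) := by
  rw [isOfFinOrder_iff_pow_eq_one]
  rintro ⟨m, hm, h⟩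
  rw [← RatFunc.algebraMap_X, ← map_pow, ← map_one (algebraMap (Polynomial K) (RatFunc K))]
    at h
  have := congrArg Polynomial.natDegree (RatFunc.algebraMap_injective K h)
  simp only [Polynomial.natDegree_X_pow, Polynomial.natDegree_one] at this
  omega

lemma one_sub_pow_ne_zero {R : Type*} [Ring R] {t : R} (ht : ¬ IsOfFinOrder t) {m : ℕ}
    (hm : 0 < m) : 1 - t ^ m ≠ 0 :=
  sub_ne_zero.mpr fun h => ht (isOfFinOrder_iff_pow_eq_one.mpr ⟨m, hm, h.symm⟩)

@[simp]
lemma qtfact_zero (q : ℕ) (t : RatFunc ℚ) : qtfact q 0 t = 1 := by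
  simp [qtfact]

lemma qtfact_succ (q m : ℕ) (t : RatFunc ℚ) :
    qtfact q (m + 1) t = (1 - t ^ (q ^ (m + 1) - 1)) * qtfact q m (t ^ q) := by
  rw [qtfact, Finset.prod_range_succ', mul_comm, pow_zero, qtfact]
  congr 1
  refine Finset.prod_congr rfl fun _ _ => ?_
  rw [← pow_mul, Nat.mul_sub, ← pow_succ', ← pow_succ']

section QtFactorial

variable {q : ℕ} {t : RatFunc ℚ}

lemma qtfact_ne_zero (hq : 1 < q) (ht : ¬ IsOfFinOrder t) (m : ℕ) : qtfact q m t ≠ 0 :=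
  Finset.prod_ne_zero_iff.mpr fun _ hi =>
    one_sub_pow_ne_zero ht (Nat.sub_pos_of_lt (Nat.pow_lt_pow_right hq (Finset.mem_range.mp hi)))

lemma qtfact_pow_ne_zero (hq : 1 < q) (ht : ¬ IsOfFinOrder t) {s : ℕ} (hs : s ≠ 0) (m : ℕ) :
    qtfact q m (t ^ s) ≠ 0 :=
  qtfact_ne_zero hq (by rwa [isOfFinOrder_pow, or_iff_left hs]) m

end QtFactorial

section QtBinomial

variable {q n k : ℕ} {t : RatFunc ℚ}

lemma qtbinom_natCast (hk : k ≤ n) :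
    qtbinom q n k t = qtfact q n t / (qtfact q k t * qtfact q (n - k) (t ^ q ^ k)) := by
  rw [qtbinom, if_pos ⟨Int.natCast_nonneg k, Int.ofNat_le.mpr hk⟩, Int.toNat_natCast]

lemma qtbinom_of_lt_zero {j : ℤ} (hj : j < 0) : qtbinom q n j t = 0 :=
  if_neg fun h => (h.1.trans_lt hj).false

lemma qtbinom_of_lt (hnk : n < k) : qtbinom q n k t = 0 :=
  if_neg fun h => (h.2.trans_lt (Int.ofNat_lt.mpr hnk)).false

lemma qtbinom_zero_right (hq : 1 < q) (ht : ¬ IsOfFinOrder t) : qtbinom q n 0 t = 1 := by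
  rw [show (0 : ℤ) = (0 : ℕ) from rfl, qtbinom_natCast (Nat.zero_le n), qtfact_zero,
    pow_zero, pow_one, Nat.sub_zero, one_mul, div_self (qtfact_ne_zero hq ht n)]

lemma qtbinom_self (hq : 1 < q) (ht : ¬ IsOfFinOrder t) : qtbinom q n n t = 1 := by
  rw [qtbinom_natCast le_rfl, Nat.sub_self, qtfact_zero, mul_one, div_self (qtfact_ne_zero hq ht n)]

lemma qtbinom_pascal_first_of_pos_of_lt (hq : 1 < q) (ht : ¬ IsOfFinOrder t)
    (hk0 : 0 < k) (hkn : k < n) :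
    qtbinom q n k t = qtbinom q (n - 1) ((k : ℤ) - 1) (t ^ q) +
      t ^ (q ^ k - 1) * (qtfact q k (t ^ q) / qtfact q k t) * qtbinom q (n - 1) k (t ^ q) := by
  obtain ⟨j, rfl⟩ : ∃ j, k = j + 1 := ⟨k - 1, by omega⟩
  obtain ⟨d, rfl⟩ : ∃ d, n = j + 1 + d + 1 := ⟨n - j - 2, by omega⟩
  have hj : ((j + 1 : ℕ) : ℤ) - 1 = j := by push_cast; ring
  rw [hj, Nat.add_sub_cancel, qtbinom_natCast (by omega), qtbinom_natCast (by omega),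
    qtbinom_natCast (by omega), show j + 1 + d + 1 - (j + 1) = d + 1 by omega,
    show j + 1 + d - j = d + 1 by omega, show j + 1 + d - (j + 1) = d by omega,
    ← pow_mul, ← pow_mul, ← pow_succ', ← pow_succ']
  have hqk : q ^ (j + 1) ≤ q ^ (j + 1 + d + 1) := Nat.pow_le_pow_right (by omega) (by omega)
  have hqk1 : q ≤ q ^ (j + 1) := Nat.le_self_pow (by omega) q
  have hn : qtfact q (j + 1 + d + 1) t = (1 - t ^ (q ^ (j + 1) - 1) * t ^ (q ^ (j + 1 + d + 1) -
      q ^ (j + 1))) * qtfact q (j + 1 + d) (t ^ q) := by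
    rw [qtfact_succ, ← pow_add]
    congr 4
    omega
  have hm : qtfact q (d + 1) (t ^ q ^ (j + 1)) =
      (1 - t ^ (q ^ (j + 1 + d + 1) - q ^ (j + 1))) * qtfact q d (t ^ q ^ (j + 1 + 1)) := by
    rw [qtfact_succ, ← pow_mul, ← pow_mul, Nat.mul_sub, mul_one, ← pow_add, ← pow_succ,
      ← add_assoc]
  rw [hn, hm, qtfact_succ q j t]
  have := qtfact_pow_ne_zero hq ht (s := q) (by omega) j
  have := qtfact_pow_ne_zero hq ht (s := q) (by omega) (j + 1)
  have := qtfact_pow_ne_zero hq ht (s := q ^ (j + 1 + 1)) (by positivity) d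
  have := one_sub_pow_ne_zero ht (m := q ^ (j + 1) - 1) (by omega)
  have := one_sub_pow_ne_zero ht (m := q ^ (j + 1 + d + 1) - q ^ (j + 1))
    (Nat.sub_pos_of_lt (Nat.pow_lt_pow_right hq (by omega)))
  field_simp
  ring

lemma qtbinom_pascal_first (hq : 1 < q) (ht : ¬ IsOfFinOrder t) (hk : k ≤ n) :
    qtbinom q n k t = qtbinom q (n - 1) ((k : ℤ) - 1) (t ^ q) +
      t ^ (q ^ k - 1) * (qtfact q k (t ^ q) / qtfact q k t) * qtbinom q (n - 1) k (t ^ q) := by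
  have htq : ¬ IsOfFinOrder (t ^ q) := fun h => ht (h.of_pow (by omega))
  rcases Nat.eq_zero_or_pos k with rfl | hk0
  · rw [Nat.cast_zero, zero_sub, qtbinom_of_lt_zero (j := -1) (by norm_num),
      qtbinom_zero_right hq ht, qtbinom_zero_right hq htq]
    simp
  rcases hk.lt_or_eq with hkn | rfl
  · exact qtbinom_pascal_first_of_pos_of_lt hq ht hk0 hkn
  · obtain ⟨m, rfl⟩ := Nat.exists_eq_add_of_lt hk0
    rw [qtbinom_self hq ht, qtbinom_of_lt (by omega), zero_add, Nat.add_sub_cancel, Nat.cast_add,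
      Nat.cast_one, add_sub_cancel_right, qtbinom_self hq htq, mul_zero, add_zero]

end QtBinomial

/-- First (q,t)-Pascal relation:
`[n choose k]_{q,t} = [n-1 choose k-1]_{q,t^q} + t^{q^k-1} · (k!_{q,t^q}/k!_{q,t}) · [n-1 choose k]_{q,t^q}`. -/
theorem qt_pascal_first (q n k : ℕ) (hq : 2 ≤ q) (hk : k ≤ n) :
    qtbinom q n (k : ℤ) RatFunc.X =
      qtbinom q (n - 1) ((k : ℤ) - 1) (RatFunc.X ^ q) +
        RatFunc.X ^ (q ^ k - 1) * (qtfact q k (RatFunc.X ^ q) / qtfact q k RatFunc.X) *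
          qtbinom q (n - 1) (k : ℤ) (RatFunc.X ^ q) :=
  qtbinom_pascal_first hq RatFunc.not_isOfFinOrder_X hk
end
end

section
/- For every integer q ≥ 2 and all integers 0 ≤ k ≤ n, the rational function [n choose k]_{q,t} = ∏_{i=1}^{k} (1 - t^{q^n - q^{i-1}})/(1 - t^{q^k - q^{i-1}}) is a polynomial in t with nonnegative integer coefficients. -/
/-!
Write `[n, k]` for the (q,t)-binomial coefficient. Substituting `t ↦ t ^ q` multiplies every
exponent `q ^ a - q ^ b` by `q`, and `1 - u ^ q = (1 + u + ⋯ + u ^ (q - 1)) (1 - u)`; together these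
give the Pascal-type recurrence
`[n+1, k+1](t) = [n, k](t^q) + t^(q^(k+1) - 1) [n, k+1](t^q) ∏_{i ≤ k} ∑_{j < q} t^(j (q^(k+1) - q^i))`,
whose right-hand side visibly has nonnegative integer coefficients once `[n, k]` and `[n, k+1]` do.
-/

open Polynomial Finset

section

variable (R : Type*) [CommRing R]

/-- The numerator of `[n, k]`; `qtProd R q k k` is its denominator. -/
noncomputable def qtProd (q n k : ℕ) : R[X] :=
  ∏ i ∈ range k, (1 - X ^ (q ^ n - q ^ i))

/-- `[n, k]` via the recurrence above, with `[n, k] = 0` for `k > n`, where the numerator vanishes. -/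
noncomputable def qtBinomial (q : ℕ) : ℕ → ℕ → ℕ[X]
  | _, 0 => 1
  | 0, _ + 1 => 0
  | n + 1, k + 1 =>
    expand ℕ q (qtBinomial q n k) +
      X ^ (q ^ (k + 1) - 1) * expand ℕ q (qtBinomial q n (k + 1)) *
        ∏ i ∈ range (k + 1), ∑ j ∈ range q, (X ^ (q ^ (k + 1) - q ^ i)) ^ j

variable {R}

theorem expand_one_sub_X_pow_pow_sub_pow (q a b : ℕ) :
    expand R q (1 - X ^ (q ^ a - q ^ b)) = 1 - X ^ (q ^ (a + 1) - q ^ (b + 1)) := by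
  rw [map_sub, map_one, map_pow, expand_X, ← pow_mul, Nat.mul_sub, ← pow_succ', ← pow_succ']

theorem expand_qtProd (q n k : ℕ) :
    expand R q (qtProd R q n k) = ∏ i ∈ range k, (1 - X ^ (q ^ (n + 1) - q ^ (i + 1))) := by
  simp only [qtProd, map_prod, expand_one_sub_X_pow_pow_sub_pow]

theorem qtProd_succ (q n k : ℕ) :
    qtProd R q n (k + 1) = qtProd R q n k * (1 - X ^ (q ^ n - q ^ k)) :=
  prod_range_succ _ _

theorem qtProd_succ_succ (q n k : ℕ) :
    qtProd R q (n + 1) (k + 1) = expand R q (qtProd R q n k) * (1 - X ^ (q ^ (n + 1) - 1)) := by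
  rw [expand_qtProd, qtProd, prod_range_succ', pow_zero]

theorem qtProd_eq_zero_of_lt {q n k : ℕ} (h : n < k) : qtProd R q n k = 0 :=
  prod_eq_zero (mem_range.2 h) (by simp)

theorem prod_geom_sum_mul_qtProd (q n k : ℕ) :
    (∏ i ∈ range k, ∑ j ∈ range q, ((X : R[X]) ^ (q ^ n - q ^ i)) ^ j) * qtProd R q n k =
      expand R q (qtProd R q n k) := by
  rw [qtProd, ← prod_mul_distrib, map_prod]
  refine prod_congr rfl fun i _ => ?_
  rw [geom_sum_mul_neg, expand_one_sub_X_pow_pow_sub_pow, ← pow_mul, Nat.sub_mul, ← pow_succ,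
    ← pow_succ]

theorem qtBinomial_eq_zero_of_lt (q : ℕ) {n k : ℕ} (h : n < k) : qtBinomial q n k = 0 := by
  induction n generalizing k with
  | zero => obtain ⟨k, rfl⟩ := Nat.exists_eq_succ_of_ne_zero h.ne'; rfl
  | succ n ih =>
    obtain ⟨k, rfl⟩ := Nat.exists_eq_succ_of_ne_zero (Nat.ne_zero_of_lt h)
    simp [qtBinomial, ih (Nat.lt_of_succ_lt_succ h), ih (Nat.lt_of_succ_lt h)]

variable (R) in
theorem qtBinomial_mul_qtProd {q : ℕ} (hq : 0 < q) (n k : ℕ) :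
    (qtBinomial q n k).map (Nat.castRingHom R) * qtProd R q k k = qtProd R q n k := by
  induction n generalizing k with
  | zero =>
    rcases k with _ | k
    · simp [qtBinomial, qtProd]
    · simp [qtBinomial, qtProd_eq_zero_of_lt k.succ_pos]
  | succ n ih =>
    rcases k with _ | k
    · simp [qtBinomial, qtProd]
    rcases lt_or_ge n k with hnk | hkn
    · rw [qtBinomial_eq_zero_of_lt q (Nat.succ_lt_succ hnk),
        qtProd_eq_zero_of_lt (Nat.succ_lt_succ hnk), Polynomial.map_zero, zero_mul]
    rw [qtBinomial]
    simp only [Polynomial.map_add, Polynomial.map_mul, Polynomial.map_pow, map_X,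
      map_expand, Polynomial.map_prod, Polynomial.map_sum]
    set a := q ^ (k + 1) - 1
    set b := q ^ (n + 1) - q ^ (k + 1)
    have hab : a + b = q ^ (n + 1) - 1 := by
      have h1 : 1 ≤ q ^ (k + 1) := Nat.one_le_pow _ _ hq
      have h2 : q ^ (k + 1) ≤ q ^ (n + 1) := Nat.pow_le_pow_right hq (by omega)
      omega
    have hlow : expand R q ((qtBinomial q n k).map (Nat.castRingHom R)) * qtProd R q (k + 1) (k + 1)
        = expand R q (qtProd R q n k) * (1 - X ^ a) := by
      rw [qtProd_succ_succ, ← mul_assoc, ← map_mul, ih]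
    have hhigh : expand R q ((qtBinomial q n (k + 1)).map (Nat.castRingHom R)) *
        ((∏ i ∈ range (k + 1), ∑ j ∈ range q, ((X : R[X]) ^ (q ^ (k + 1) - q ^ i)) ^ j) *
          qtProd R q (k + 1) (k + 1)) = expand R q (qtProd R q n k) * (1 - X ^ b) := by
      rw [prod_geom_sum_mul_qtProd, ← map_mul, ih, qtProd_succ, map_mul,
        expand_one_sub_X_pow_pow_sub_pow]
    rw [qtProd_succ_succ q n k, ← hab, pow_add X a b]
    -- `(1 - X ^ a) + X ^ a * (1 - X ^ b) = 1 - X ^ (a + b)`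
    linear_combination hlow + X ^ a * hhigh

theorem qtProd_ne_zero [IsDomain R] {q n k : ℕ} (hq : 1 < q) (hk : k ≤ n) : qtProd R q n k ≠ 0 := by
  refine prod_ne_zero_iff.2 fun i hi => ?_
  have hpos : 0 < q ^ n - q ^ i :=
    Nat.sub_pos_of_lt (Nat.pow_lt_pow_right hq ((mem_range.1 hi).trans_le hk))
  rw [← neg_sub, neg_ne_zero, ← C_1]
  exact X_pow_sub_C_ne_zero hpos 1

end

theorem algebraMap_qtProd {K : Type*} [Field K] (q n k : ℕ) :
    algebraMap K[X] (RatFunc K) (qtProd K q n k) =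
      ∏ i ∈ range k, (1 - RatFunc.X ^ (q ^ n - q ^ i)) := by
  simp [qtProd, RatFunc.algebraMap_X]

theorem qtbinom_is_polynomial_with_nonneg_int_coeffs_general (q n k : ℕ) (hq : 2 ≤ q) :
    ∃ p : Polynomial ℚ, (∀ i, ∃ m : ℕ, p.coeff i = (m : ℚ)) ∧
      algebraMap (Polynomial ℚ) (RatFunc ℚ) p =
        ∏ i ∈ Finset.range k,
          (1 - (RatFunc.X : RatFunc ℚ) ^ (q ^ n - q ^ i)) / (1 - RatFunc.X ^ (q ^ k - q ^ i)) := by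
  refine ⟨(qtBinomial q n k).map (Nat.castRingHom ℚ),
    fun i => ⟨(qtBinomial q n k).coeff i, coeff_map _ _⟩, ?_⟩
  have hden : algebraMap ℚ[X] (RatFunc ℚ) (qtProd ℚ q k k) ≠ 0 :=
    (map_ne_zero_iff _ (IsFractionRing.injective _ _)).2 (qtProd_ne_zero hq le_rfl)
  rw [prod_div_distrib, ← algebraMap_qtProd, ← algebraMap_qtProd, eq_div_iff hden, ← map_mul,
    qtBinomial_mul_qtProd ℚ (by omega)]

/-- For every integer `q ≥ 2` and `0 ≤ k ≤ n`, the (q,t)-binomial coefficient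
`[n choose k]_{q,t} = ∏_{i=1}^{k} (1 - t^{q^n - q^{i-1}})/(1 - t^{q^k - q^{i-1}})`
is a polynomial in `t` with nonnegative integer coefficients. -/
theorem qtbinom_is_polynomial_with_nonneg_int_coeffs (q n k : ℕ) (hq : 2 ≤ q) (hk : k ≤ n) :
    ∃ p : Polynomial ℚ, (∀ i, ∃ m : ℕ, p.coeff i = (m : ℚ)) ∧
      algebraMap (Polynomial ℚ) (RatFunc ℚ) p =
        ∏ i ∈ Finset.range k,
          (1 - (RatFunc.X : RatFunc ℚ) ^ (q ^ n - q ^ i)) / (1 - RatFunc.X ^ (q ^ k - q ^ i)) :=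
  qtbinom_is_polynomial_with_nonneg_int_coeffs_general q n k hq
end

section
/- The quotient of (q,t)-factorials factors as k!_{q,t^q} / k!_{q,t} = ∏_{i=0}^{k-1} [q]_{t^{q^k - q^i}}, where [N]_s := (1-s^N)/(1-s) = 1 + s + ... + s^{N-1}. In particular, for integers q ≥ 2 this quotient is a polynomial in t with nonnegative coefficients. -/
noncomputable section

open Finset Polynomial

/-- `[N]_s := (1 - s^N)/(1 - s)`. -/
def qint (N : ℕ) (s : RatFunc ℚ) : RatFunc ℚ := (1 - s ^ N) / (1 - s)

theorem RatFunc.X_pow_ne_one {K : Type*} [Field K] {n : ℕ} (hn : n ≠ 0) :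
    (RatFunc.X : RatFunc K) ^ n ≠ 1 := by
  rw [← RatFunc.algebraMap_X, ← map_pow, Ne, FaithfulSMul.algebraMap_eq_one_iff]
  intro h
  simpa [hn] using congrArg natDegree h

theorem qtfact_pow_div_qtfact (q k : ℕ) (t : RatFunc ℚ) :
    qtfact q k (t ^ q) / qtfact q k t = ∏ i ∈ range k, qint q (t ^ (q ^ k - q ^ i)) := by
  rw [qtfact, qtfact, ← prod_div_distrib]
  refine prod_congr rfl fun i _ => ?_
  rw [qint, ← pow_mul, ← pow_mul, mul_comm]

theorem qint_eq_geom_sum (N : ℕ) {s : RatFunc ℚ} (hs : s ≠ 1) :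
    qint N s = ∑ j ∈ range N, s ^ j := by
  rw [qint, geom_sum_eq hs, ← neg_div_neg_eq, neg_sub, neg_sub]

/-- The quotient of (q,t)-factorials factors as
`k!_{q,t^q} / k!_{q,t} = ∏_{i=0}^{k-1} [q]_{t^{q^k - q^i}}`; in particular for integers `q ≥ 2`
it is a polynomial in `t` with nonnegative coefficients. -/
theorem qtfact_quotient_factorization (q k : ℕ) (hq : 2 ≤ q) :
    qtfact q k (RatFunc.X ^ q) / qtfact q k RatFunc.X =
        ∏ i ∈ Finset.range k, qint q ((RatFunc.X : RatFunc ℚ) ^ (q ^ k - q ^ i)) ∧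
      ∃ p : Polynomial ℚ, (∀ i, 0 ≤ p.coeff i) ∧
        algebraMap (Polynomial ℚ) (RatFunc ℚ) p =
          qtfact q k (RatFunc.X ^ q) / qtfact q k RatFunc.X := by
  refine ⟨qtfact_pow_div_qtfact q k _, ?_⟩
  -- nonnegativity is automatic for the image of a polynomial over `ℕ`
  let p : ℕ[X] := ∏ i ∈ range k, ∑ j ∈ range q, X ^ ((q ^ k - q ^ i) * j)
  refine ⟨p.map (Nat.castRingHom ℚ), fun n => by simp [coeff_map], ?_⟩
  rw [qtfact_pow_div_qtfact]
  simp only [p, Polynomial.map_prod, Polynomial.map_sum, Polynomial.map_pow, Polynomial.map_X,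
    map_prod, map_sum, map_pow, RatFunc.algebraMap_X, pow_mul]
  refine prod_congr rfl fun i hi => (qint_eq_geom_sum q (RatFunc.X_pow_ne_one ?_)).symm
  exact Nat.sub_ne_zero_of_lt (Nat.pow_lt_pow_right hq (mem_range.mp hi))
end
end

section
/- For integers n ≥ k ≥ 0 and q ≥ 2, the principal specialization of Macdonald's Schur analogue for one-row shapes satisfies H_{n-k}(1, t, t^2, ..., t^k) = [n choose k]_{q,t}, where H_r(x_1,...,x_{k+1}) := det((x_i^{q^{α_j}}))/det((x_i^{q^{n-j}})) with α = (r+k, k-1, k-2, ..., 1, 0). -/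
open Finset Matrix

/-! Both bialternants are transposed Vandermonde determinants in the points `t^{q^e}`, and the
two point sets differ only in the first point (`t^{q^n}` versus `t^{q^k}`). In the product
formula every factor not involving the first point cancels, leaving
`∏_{i<k} (t^{q^i} - t^{q^n}) / (t^{q^i} - t^{q^k})`; pulling `t^{q^i}` out of numerator and
denominator gives the factors of the `(q,t)`-binomial. -/

theorem RatFunc.X_pow_injective (K : Type*) [Field K] :
    Function.Injective fun n : ℕ => (RatFunc.X : RatFunc K) ^ n := fun a b h =>
  pow_injective_of_not_isUnit Polynomial.not_isUnit_X Polynomial.X_ne_zero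
    (RatFunc.algebraMap_injective K (by simpa [map_pow, RatFunc.algebraMap_X] using h))

theorem Matrix.of_pow_mul_eq_vandermonde_transpose {R : Type*} [CommRing R] {n : ℕ}
    (x : R) (e : Fin n → ℕ) :
    Matrix.of (fun i j : Fin n => x ^ ((i : ℕ) * e j)) = (vandermonde fun j => x ^ e j)ᵀ := by
  ext i j
  simp [← pow_mul, mul_comm]

theorem Matrix.det_vandermonde_cons {R : Type*} [CommRing R] {n : ℕ} (a : R) (u : Fin n → R) :
    det (vandermonde (Fin.cons a u : Fin (n + 1) → R)) =
      (∏ i, (u i - a)) * det (vandermonde u) := by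
  simp only [det_vandermonde, Fin.prod_univ_succ, Fin.prod_Ioi_zero, Fin.prod_Ioi_succ,
    Fin.cons_zero, Fin.cons_succ]

theorem Matrix.det_vandermonde_cons_div_det_vandermonde_cons {K : Type*} [Field K] {n : ℕ}
    (a b : K) {u : Fin n → K} (hu : Function.Injective u) :
    det (vandermonde (Fin.cons a u : Fin (n + 1) → K)) / det (vandermonde (Fin.cons b u)) =
      ∏ i, (u i - a) / (u i - b) := by
  rw [det_vandermonde_cons, det_vandermonde_cons,
    mul_div_mul_right _ _ (det_vandermonde_ne_zero_iff.mpr hu), prod_div_distrib]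

theorem pow_sub_pow_div_pow_sub_pow {K : Type*} [Field K] {x : K} (hx : x ≠ 0) {a b c : ℕ}
    (hb : a ≤ b) (hc : a ≤ c) :
    (x ^ a - x ^ b) / (x ^ a - x ^ c) = (1 - x ^ (b - a)) / (1 - x ^ (c - a)) := by
  have factor : ∀ d, a ≤ d → x ^ a - x ^ d = x ^ a * (1 - x ^ (d - a)) := fun d hd => by
    rw [mul_sub, mul_one, ← pow_add, Nat.add_sub_cancel' hd]
  rw [factor b hb, factor c hc, mul_div_mul_left _ _ (pow_ne_zero a hx)]

theorem prod_range_pow_sub_pow_div_pow_sub_pow {K : Type*} [Field K] {x : K} (hx : x ≠ 0)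
    {q n k : ℕ} (hq : 1 ≤ q) (hk : k ≤ n) :
    ∏ i ∈ range k, (x ^ q ^ i - x ^ q ^ n) / (x ^ q ^ i - x ^ q ^ k) =
      ∏ i ∈ range k, (1 - x ^ (q ^ n - q ^ i)) / (1 - x ^ (q ^ k - q ^ i)) :=
  prod_congr rfl fun i hi => pow_sub_pow_div_pow_sub_pow hx
    (Nat.pow_le_pow_right hq (by grind)) (Nat.pow_le_pow_right hq (by grind))

/-- For integers `n ≥ k ≥ 0` and `q ≥ 2`, the principal specialization of Macdonald's Schur
analogue for the one-row shape `(n-k)` in `k+1` variables satisfies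
`H_{n-k}(1, t, …, t^k) = [n choose k]_{q,t}`.  Here `H_r = S_{(r)}` is the bialternant
`det((t^{i-1})^{q^{λ_j + m - j}}) / det((t^{i-1})^{q^{m-j}})` with `m = k+1` and
`λ = (n-k, 0, …, 0)`, so the exponents in column `j` (0-indexed) are `q^n` for `j = 0`
and `q^{k-j}` otherwise. -/
theorem qt_homogeneous_principal_specialization (q n k : ℕ) (hq : 2 ≤ q) (hk : k ≤ n) :
    Matrix.det (Matrix.of fun i j : Fin (k + 1) =>
        (RatFunc.X : RatFunc ℚ) ^ ((i : ℕ) * q ^ (if (j : ℕ) = 0 then n else k - (j : ℕ))))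
      / Matrix.det (Matrix.of fun i j : Fin (k + 1) =>
        (RatFunc.X : RatFunc ℚ) ^ ((i : ℕ) * q ^ (k - (j : ℕ))))
      = ∏ i ∈ Finset.range k,
          (1 - (RatFunc.X : RatFunc ℚ) ^ (q ^ n - q ^ i)) / (1 - RatFunc.X ^ (q ^ k - q ^ i)) := by
  set t : RatFunc ℚ := RatFunc.X
  let u : Fin k → RatFunc ℚ := fun i => t ^ q ^ (i.rev : ℕ)
  have hu : Function.Injective u := (RatFunc.X_pow_injective ℚ).comp <|
    (Nat.pow_right_injective hq).comp <| Fin.val_injective.comp Fin.rev_injective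
  have points : ∀ m, (fun j : Fin (k + 1) => t ^ q ^ (if (j : ℕ) = 0 then m else k - j))
      = Fin.cons (t ^ q ^ m) u := fun m => by
    ext j
    refine Fin.cases (by simp) (fun i => ?_) j
    simp [u, Fin.val_rev]
  have points_k : (fun j : Fin (k + 1) => t ^ q ^ (k - j)) = Fin.cons (t ^ q ^ k) u := by
    rw [← points]
    ext j
    split_ifs with h <;> simp only [h, Nat.sub_zero]
  rw [of_pow_mul_eq_vandermonde_transpose, of_pow_mul_eq_vandermonde_transpose, det_transpose,
    det_transpose, points, points_k, det_vandermonde_cons_div_det_vandermonde_cons _ _ hu,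
    ← prod_range_pow_sub_pow_div_pow_sub_pow RatFunc.X_ne_zero (by omega) hk,
    ← Fin.prod_univ_eq_prod_range (fun i => (t ^ q ^ i - t ^ q ^ n) / (t ^ q ^ i - t ^ q ^ k))]
  exact Fintype.prod_equiv Fin.revPerm _ _ fun _ => rfl
end

section
/- In the twisted algebra where (f(t)·y^k)·(g(t)·y^ℓ) := f(t)·g(t^{q^k})·y^{k+ℓ}, the divided powers y^{(n)} := y^n / n!_{q,t} multiply according to y^{(k)} · y^{(ℓ)} = [k+ℓ choose k]_{q,t} · y^{(k+ℓ)}. -/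
/-!
The binomial `[k+l choose k]_{q,t}` is by definition `(k+l)!_{q,t}` divided by
`k!_{q,t} · l!_{q,t^{q^k}}`, so the identity amounts to cancelling `(k+l)!_{q,t}`. That
factorial is nonzero at `t = X` because for `q ≥ 2` every factor `1 - X^{q^n - q^i}` with
`i < n` has a positive exponent.
-/

noncomputable section

/-- The (q,t)-binomial `[n choose k]_{q,t} = n!_{q,t}/(k!_{q,t} · (n-k)!_{q,t^{q^k}})`. -/
def qtbin (q n k : ℕ) (t : RatFunc ℚ) : RatFunc ℚ :=
  qtfact q n t / (qtfact q k t * qtfact q (n - k) (t ^ q ^ k))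

/-- The twisted multiplication `(f(t)·y^k)·(g(t)·y^ℓ) := f(t)·g(t^{q^k})·y^{k+ℓ}` on
monomials, represented as pairs of a coefficient (a function of `t`, so that the Frobenius
`t ↦ t^{q^k}` acts by substitution in the argument) and an exponent of `y`. -/
def twMul (q : ℕ) (a b : (RatFunc ℚ → RatFunc ℚ) × ℕ) : (RatFunc ℚ → RatFunc ℚ) × ℕ :=
  (fun t => a.1 t * b.1 (t ^ q ^ a.2), a.2 + b.2)

open Polynomial

theorem RatFunc.one_sub_X_pow_ne_zero {K : Type*} [CommRing K] [IsDomain K] {m : ℕ}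
    (hm : m ≠ 0) : (1 - RatFunc.X ^ m : RatFunc K) ≠ 0 := by
  rw [← RatFunc.algebraMap_X, ← map_pow, ← map_one (algebraMap K[X] _), ← map_sub, ← C_1,
    map_ne_zero_iff _ (IsFractionRing.injective K[X] (RatFunc K)), ← neg_sub, neg_ne_zero]
  exact X_pow_sub_C_ne_zero (Nat.pos_of_ne_zero hm) 1

theorem qtfact_X_ne_zero {q : ℕ} (hq : 1 < q) (n : ℕ) : qtfact q n RatFunc.X ≠ 0 :=
  Finset.prod_ne_zero_iff.2 fun _ hi => RatFunc.one_sub_X_pow_ne_zero <|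
    Nat.sub_ne_zero_of_lt <| Nat.pow_lt_pow_right hq (Finset.mem_range.1 hi)

theorem qtbin_add_mul_inv_qtfact (q k l : ℕ) (t : RatFunc ℚ) (ht : qtfact q (k + l) t ≠ 0) :
    qtbin q (k + l) k t * (qtfact q (k + l) t)⁻¹ =
      (qtfact q k t * qtfact q l (t ^ q ^ k))⁻¹ := by
  rw [qtbin, Nat.add_sub_cancel_left, div_mul_eq_mul_div, mul_inv_cancel₀ ht, one_div]

/-- In the twisted algebra, the divided powers `y^{(n)} := y^n / n!_{q,t}` multiply according
to `y^{(k)} · y^{(ℓ)} = [k+ℓ choose k]_{q,t} · y^{(k+ℓ)}`. -/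
theorem divided_power_twisted_multiplication (q k l : ℕ) (hq : 2 ≤ q) :
    (twMul q (fun t => (qtfact q k t)⁻¹, k) (fun t => (qtfact q l t)⁻¹, l)).2 = k + l ∧
    (twMul q (fun t => (qtfact q k t)⁻¹, k) (fun t => (qtfact q l t)⁻¹, l)).1 RatFunc.X
      = qtbin q (k + l) k RatFunc.X * (qtfact q (k + l) RatFunc.X)⁻¹ := by
  refine ⟨rfl, ?_⟩
  rw [qtbin_add_mul_inv_qtfact q k l _ (qtfact_X_ne_zero hq _), mul_inv]
  rfl
end
end
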